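/- arXiv:math/0602562 — 6 statements merged into one kernel-verified Lean document; each statement's English description precedes it below -/
import Mathlib

section
/- Let n ≥ 2 and let a_1, ..., a_n be integers (indices taken modulo n) with ∏_{i=1}^n a_i ≠ (-1)^n. Define W_i := Σ_{j=1}^{n} (-1)^{j-1} ∏_{ℓ=i+j}^{i+n-1} a_ℓ (empty product = 1, indices mod n) and D := ∏_{ℓ=1}^n a_ℓ + (-1)^{n-1}. Then for every i, a_i·W_i + W_{i+1} = D. -/
/-- `cyclicW n a i` is `W_i := Σ_{j=1}^{n} (-1)^{j-1} ∏_{ℓ=i+j}^{i+n-1} a_ℓ`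
(indices mod `n`, empty product = 1). -/
def cyclicW (n : ℕ) [NeZero n] (a : ZMod n → ℤ) (i : ZMod n) : ℤ :=
  ∑ j ∈ Finset.range n,
    (-1 : ℤ) ^ j * ∏ t ∈ Finset.range (n - 1 - j), a (i + (j : ZMod n) + 1 + (t : ZMod n))

/-- `cyclicD n a` is `D := ∏_{ℓ=1}^n a_ℓ + (-1)^{n-1}`. -/
def cyclicD (n : ℕ) [NeZero n] (a : ZMod n → ℤ) : ℤ :=
  (∏ i : ZMod n, a i) + (-1) ^ (n - 1)

private lemma prod_range_zmod {n : ℕ} [NeZero n] (f : ZMod n → ℤ) :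
    ∏ t ∈ Finset.range n, f (t : ZMod n) = ∏ x : ZMod n, f x := by
  refine Finset.prod_nbij' (fun t => (t : ZMod n)) (fun x => x.val) ?_ ?_ ?_ ?_ ?_
  · intro t ht; exact Finset.mem_univ _
  · intro x _; simpa using ZMod.val_lt x
  · intro t ht; simp [ZMod.val_cast_of_lt (Finset.mem_range.mp ht)]
  · intro x _; simp [ZMod.natCast_val, ZMod.cast_id]
  · intro t ht; rfl

theorem stmt0 (n : ℕ) [NeZero n] (hn : 2 ≤ n) (a : ZMod n → ℤ)
    (ha : (∏ i : ZMod n, a i) ≠ (-1) ^ n) :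
    ∀ i : ZMod n, a i * cyclicW n a i + cyclicW n a (i + 1) = cyclicD n a := by
  intro i
  obtain ⟨m, rfl⟩ : ∃ m, n = m + 1 := ⟨n - 1, by omega⟩
  rw [cyclicW, cyclicW, cyclicD]
  simp only [Nat.add_sub_cancel]
  have hB : ∀ j ∈ Finset.range m,
      a i * ((-1:ℤ)^(j+1) *
        ∏ t ∈ Finset.range (m - (j+1)), a (i + ((j+1 : ℕ) : ZMod (m+1)) + 1 + (t : ZMod (m+1))))
      = -((-1:ℤ)^j *
        ∏ t ∈ Finset.range (m - j), a (i + 1 + (j : ZMod (m+1)) + 1 + (t : ZMod (m+1)))) := by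
    intro j hj
    have hj' : j < m := Finset.mem_range.mp hj
    have hsub : m - j = (m - (j+1)) + 1 := by omega
    rw [hsub, Finset.prod_range_succ]
    have hcast : ((m - (j+1) : ℕ) : ZMod (m+1)) = -((j : ZMod (m+1)) + 2) := by
      have h : (m - (j+1)) + (j + 2) = m + 1 := by omega
      have h2 : ((m - (j+1) : ℕ) : ZMod (m+1)) + (((j+2 : ℕ)) : ZMod (m+1))
          = ((m+1 : ℕ) : ZMod (m+1)) := by rw [← Nat.cast_add, h]
      rw [ZMod.natCast_self] at h2
      push_cast at h2
      linear_combination h2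
    have hidx : i + 1 + (j : ZMod (m+1)) + 1 + ((m - (j+1) : ℕ) : ZMod (m+1)) = i := by
      rw [hcast]; ring
    rw [hidx]
    have hidx2 : ∀ t : ℕ,
        i + ((j+1 : ℕ) : ZMod (m+1)) + 1 + (t : ZMod (m+1))
        = i + 1 + (j : ZMod (m+1)) + 1 + (t : ZMod (m+1)) := by
      intro t; push_cast; ring
    simp_rw [hidx2]
    ring
  have hA : a i * ∏ t ∈ Finset.range m,
      a (i + 0 + 1 + (t : ZMod (m+1))) = ∏ x : ZMod (m+1), a x := by
    have h1 : ∏ x : ZMod (m+1), a x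
        = ∏ t ∈ Finset.range (m+1), a (i + (t : ZMod (m+1))) := by
      rw [prod_range_zmod (fun x => a (i + x))]
      exact (Equiv.prod_comp (Equiv.addLeft i) a).symm
    rw [h1, Finset.prod_range_succ']
    rw [mul_comm]
    congr 1
    · apply Finset.prod_congr rfl; intro t _; congr 1; push_cast; ring
    · simp
  rw [Finset.sum_range_succ' _ m, Finset.sum_range_succ, mul_add, Finset.mul_sum]
  rw [Finset.sum_congr rfl hB]
  rw [Finset.sum_neg_distrib]
  simp only [Nat.cast_zero, pow_zero, one_mul, Nat.sub_self, Nat.sub_zero, Finset.range_zero,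
    Finset.prod_empty, mul_one]
  rw [hA]
  ring
end

section
/- Let n ≥ 2 and let a_1, ..., a_n be integers with ∏ a_i ≠ (-1)^n. With W_i and D as above, set w* := gcd(W_1, ..., W_n). Then w* = gcd(W_i, D) for every i, and w* = gcd(W_i, W_{i+1}) for every i (indices mod n). -/
lemma prod_range_natCast (n : ℕ) [NeZero n] (f : ZMod n → ℤ) :
    ∏ t ∈ Finset.range n, f (t : ZMod n) = ∏ x : ZMod n, f x := by
  have hinj : ∀ x ∈ Finset.range n, ∀ y ∈ Finset.range n,
      ((x : ZMod n) = (y : ZMod n)) → x = y := by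
    intro x hx y hy h
    have := congrArg ZMod.val h
    rwa [ZMod.val_cast_of_lt (Finset.mem_range.mp hx),
      ZMod.val_cast_of_lt (Finset.mem_range.mp hy)] at this
  have himg : (Finset.range n).image (fun t : ℕ => (t : ZMod n)) = Finset.univ := by
    apply Finset.eq_univ_of_card
    rw [Finset.card_image_of_injOn hinj, Finset.card_range, ZMod.card]
  rw [← himg, Finset.prod_image hinj]

lemma cyclic_key (n : ℕ) [NeZero n] (a : ZMod n → ℤ) (i : ZMod n) :
    a i * cyclicW n a i + cyclicW n a (i + 1) = cyclicD n a := by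
  have hn : 1 ≤ n := Nat.one_le_iff_ne_zero.mpr (NeZero.ne n)
  set P : ℕ → ℤ :=
    fun j => ∏ t ∈ Finset.range (n - j), a (i + (j : ZMod n) + 1 + (t : ZMod n)) with hP
  have h1 : a i * cyclicW n a i = ∑ j ∈ Finset.range n, (-1 : ℤ) ^ j * P j := by
    rw [cyclicW, Finset.mul_sum]
    refine Finset.sum_congr rfl fun j hj => ?_
    have hj' := Finset.mem_range.mp hj
    have hnj : n - j = (n - 1 - j) + 1 := by omega
    rw [hP]
    dsimp only
    rw [hnj, Finset.prod_range_succ]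
    have hcast : i + (j : ZMod n) + 1 + ((n - 1 - j : ℕ) : ZMod n) = i := by
      have e : ((j + 1 + (n - 1 - j) : ℕ) : ZMod n) = ((n : ℕ) : ZMod n) := by
        congr 1; omega
      rw [ZMod.natCast_self] at e
      push_cast at e
      calc i + (j : ZMod n) + 1 + ((n - 1 - j : ℕ) : ZMod n)
          = i + ((j : ZMod n) + 1 + ((n - 1 - j : ℕ) : ZMod n)) := by ring
        _ = i + 0 := by rw [e]
        _ = i := by ring
    rw [hcast]
    ring
  have h2 : cyclicW n a (i + 1) = ∑ j ∈ Finset.range n, (-1 : ℤ) ^ j * P (j + 1) := by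
    rw [cyclicW]
    refine Finset.sum_congr rfl fun j hj => ?_
    congr 1
    rw [hP]
    dsimp only
    have hnj : n - (j + 1) = n - 1 - j := by omega
    rw [hnj]
    refine Finset.prod_congr rfl fun t _ => ?_
    congr 1
    push_cast
    ring
  have h3 : ∑ j ∈ Finset.range n, ((-1 : ℤ) ^ j * P j - (-1) ^ (j + 1) * P (j + 1))
      = (-1 : ℤ) ^ 0 * P 0 - (-1) ^ n * P n :=
    Finset.sum_range_sub' (fun j => (-1 : ℤ) ^ j * P j) n
  have hP0 : P 0 = ∏ x : ZMod n, a x := by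
    rw [hP]
    dsimp only
    rw [Nat.sub_zero]
    rw [show (∏ t ∈ Finset.range n, a (i + ((0 : ℕ) : ZMod n) + 1 + (t : ZMod n)))
        = ∏ t ∈ Finset.range n, (fun x => a (i + 1 + x)) (t : ZMod n) from by
      refine Finset.prod_congr rfl fun t _ => ?_; push_cast; ring_nf]
    rw [prod_range_natCast n (fun x => a (i + 1 + x))]
    exact Equiv.prod_comp (Equiv.addLeft (i + 1)) a
  have hPn : P n = 1 := by
    rw [hP]; dsimp only; rw [Nat.sub_self]; simp
  rw [h1, h2, ← Finset.sum_add_distrib]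
  have : ∑ j ∈ Finset.range n, ((-1 : ℤ) ^ j * P j + (-1) ^ j * P (j + 1))
      = ∑ j ∈ Finset.range n, ((-1 : ℤ) ^ j * P j - (-1) ^ (j + 1) * P (j + 1)) := by
    refine Finset.sum_congr rfl fun j _ => ?_
    rw [pow_succ]
    ring
  rw [this, h3, hP0, hPn, cyclicD]
  have hn' : n = (n - 1) + 1 := by omega
  have hpow : (-1 : ℤ) ^ n = (-1) ^ (n - 1) * (-1) := by
    have := pow_succ (-1 : ℤ) (n - 1); rwa [← hn'] at this
  rw [hpow]
  ring

/-- `w* = gcd(W_1,…,W_n)` equals `gcd(W_i, D)` and `gcd(W_i, W_{i+1})` for every `i`. -/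
theorem stmt2 (n : ℕ) [NeZero n] (hn : 2 ≤ n) (a : ZMod n → ℤ)
    (ha : (∏ i : ZMod n, a i) ≠ (-1) ^ n) :
    ∀ i : ZMod n,
      Finset.univ.gcd (cyclicW n a) = gcd (cyclicW n a i) (cyclicD n a) ∧
      Finset.univ.gcd (cyclicW n a) = gcd (cyclicW n a i) (cyclicW n a (i + 1)) := by
  intro i
  set W := cyclicW n a with hW
  set D := cyclicD n a with hD
  have key : ∀ k, a k * W k + W (k + 1) = D := fun k => cyclic_key n a k
  -- if d divides W i and D, it divides every W k
  have hdvd : ∀ d : ℤ, d ∣ W i → d ∣ D → ∀ k, d ∣ W k := by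
    intro d hWi hDd k
    have hall : ∀ m : ℕ, d ∣ W (i + (m : ZMod n)) := by
      intro m
      induction m with
      | zero => simpa using hWi
      | succ m ih =>
        have hcast : ((m + 1 : ℕ) : ZMod n) = (m : ZMod n) + 1 := by push_cast; ring
        rw [hcast, ← add_assoc]
        have hrw : W (i + (m : ZMod n) + 1) = D - a (i + (m : ZMod n)) * W (i + (m : ZMod n)) := by
          have := key (i + (m : ZMod n)); linarith
        rw [hrw]
        exact dvd_sub hDd (ih.mul_left _)
    have hk : k = i + (((k - i).val : ℕ) : ZMod n) := by
      rw [ZMod.natCast_rightInverse (k - i)]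
      ring
    rw [hk]
    exact hall _
  have hg_dvd : ∀ k, Finset.univ.gcd W ∣ W k := fun k => Finset.gcd_dvd (Finset.mem_univ k)
  have hg_dvd_D : Finset.univ.gcd W ∣ D := by
    rw [← key i]
    exact dvd_add ((hg_dvd i).mul_left _) (hg_dvd (i + 1))
  have hg_nonneg : 0 ≤ Finset.univ.gcd W := by
    have h := Finset.normalize_gcd (s := (Finset.univ : Finset (ZMod n))) (f := W)
    rw [← Int.abs_eq_normalize] at h
    rw [← h]
    exact abs_nonneg _
  have hgcd_nonneg : ∀ x y : ℤ, 0 ≤ gcd x y := by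
    intro x y
    rw [← Int.coe_gcd]
    exact Int.natCast_nonneg _
  constructor
  · refine Int.dvd_antisymm hg_nonneg (hgcd_nonneg _ _) (dvd_gcd (hg_dvd i) hg_dvd_D) ?_
    exact Finset.dvd_gcd fun k _ => hdvd _ (gcd_dvd_left _ _) (gcd_dvd_right _ _) k
  · refine Int.dvd_antisymm hg_nonneg (hgcd_nonneg _ _)
      (dvd_gcd (hg_dvd i) (hg_dvd (i + 1))) ?_
    have hdD : gcd (W i) (W (i + 1)) ∣ D := by
      rw [← key i]
      exact dvd_add ((gcd_dvd_left _ _).mul_left _) (gcd_dvd_right _ _)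
    exact Finset.dvd_gcd fun k _ => hdvd _ (gcd_dvd_left _ _) hdD k
end

section
/- Let m_1 < m_2 < ... < m_k be pairwise relatively prime integers, all ≥ 2, such that Σ_{i=1}^k (1 - 1/m_i) ≤ 3. Then k ≤ 4; moreover if k = 4 then (m_1, m_2, m_3) = (2, 3, 5) with gcd(m_4, 30) = 1, or (m_1, m_2, m_3) = (2, 3, 7) with m_4 ∈ {11, 13, 17, 19, 23, 25, 29, 31, 37, 41}, or (m_1, m_2, m_3, m_4) = (2, 3, 11, 13). -/
private lemma recb (x n : ℕ) (q : ℚ) (hq : 0 < q) (hx : n ≤ x) (he : q * n = 1) :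
    ((x:ℚ))⁻¹ ≤ q := by
  have hn : (0:ℚ) < n := by
    rcases Nat.eq_zero_or_pos n with h | h
    · subst h; simp at he
    · exact_mod_cast h
  have hx' : (n:ℚ) ≤ x := by exact_mod_cast hx
  have : ((x:ℚ))⁻¹ ≤ ((n:ℚ))⁻¹ := by
    apply inv_anti₀ hn hx'
  have he' : (n:ℚ) * q = 1 := by rw [mul_comm]; exact he
  rw [inv_eq_of_mul_eq_one_right he'] at this
  exact this

private lemma key (a b c d : ℕ) (ha : 2 ≤ a) (hab : a < b) (hbc : b < c) (hcd : c < d)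
    (cab : Nat.Coprime a b) (cac : Nat.Coprime a c) (cad : Nat.Coprime a d)
    (cbc : Nat.Coprime b c) (cbd : Nat.Coprime b d) (ccd : Nat.Coprime c d)
    (hq : 1 ≤ (1:ℚ)/a + 1/b + 1/c + 1/d) :
    (a = 2 ∧ b = 3 ∧ c = 5 ∧ Nat.Coprime d 30) ∨
    (a = 2 ∧ b = 3 ∧ c = 7 ∧ d ∈ ({11, 13, 17, 19, 23, 25, 29, 31, 37, 41} : Set ℕ)) ∨
    (a = 2 ∧ b = 3 ∧ c = 11 ∧ d = 13) := by
  simp only [one_div] at hq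
  have ea : a = 2 := by
    by_contra hne
    have f1 := recb a 3 (1/3) (by norm_num) (by omega) (by norm_num)
    have f2 := recb b 4 (1/4) (by norm_num) (by omega) (by norm_num)
    have f3 := recb c 5 (1/5) (by norm_num) (by omega) (by norm_num)
    have f4 := recb d 6 (1/6) (by norm_num) (by omega) (by norm_num)
    linarith
  subst ea
  have hob : ¬ 2 ∣ b := (Nat.prime_two.coprime_iff_not_dvd).mp cab
  have hoc : ¬ 2 ∣ c := (Nat.prime_two.coprime_iff_not_dvd).mp cac
  have hod : ¬ 2 ∣ d := (Nat.prime_two.coprime_iff_not_dvd).mp cad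
  norm_num at hq
  have eb : b = 3 := by
    by_contra hne
    have f2 := recb b 5 (1/5) (by norm_num) (by omega) (by norm_num)
    have f3 := recb c 7 (1/7) (by norm_num) (by omega) (by norm_num)
    have f4 := recb d 9 (1/9) (by norm_num) (by omega) (by norm_num)
    linarith
  subst eb
  have h3c : ¬ 3 ∣ c := (Nat.prime_three.coprime_iff_not_dvd).mp cbc
  have h3d : ¬ 3 ∣ d := (Nat.prime_three.coprime_iff_not_dvd).mp cbd
  norm_num at hq
  have hc12 : c ≤ 12 := by
    by_contra hne
    have f3 := recb c 13 (1/13) (by norm_num) (by omega) (by norm_num)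
    have f4 := recb d 14 (1/14) (by norm_num) (by omega) (by norm_num)
    linarith
  have hc4 : 4 ≤ c := by omega
  interval_cases c
  · omega
  · -- c = 5
    left
    refine ⟨rfl, rfl, rfl, ?_⟩
    have h30 : (30:ℕ) = 2*(3*5) := by norm_num
    rw [h30]
    exact (cad.symm).mul_right ((cbd.symm).mul_right (ccd.symm))
  · omega
  · -- c = 7
    have h7d : ¬ 7 ∣ d := ((by norm_num : Nat.Prime 7).coprime_iff_not_dvd).mp ccd
    norm_num at hq
    have hd42 : d ≤ 42 := by
      by_contra hne
      have f4 := recb d 43 (1/43) (by norm_num) (by omega) (by norm_num)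
      linarith
    have hd8 : 8 ≤ d := by omega
    interval_cases d <;>
      first
        | omega
        | (right; left; exact ⟨rfl, rfl, rfl, by simp⟩)
  · omega
  · omega
  · omega
  · -- c = 11
    norm_num at hq
    have hd13 : d ≤ 13 := by
      by_contra hne
      have f4 := recb d 14 (1/14) (by norm_num) (by omega) (by norm_num)
      linarith
    have hd12 : 12 ≤ d := by omega
    interval_cases d
    · omega
    · right; right; exact ⟨rfl, rfl, rfl, rfl⟩
  · omega

/-- Pairwise coprime integers `2 ≤ m_1 < m_2 < ⋯ < m_k` with
`Σ (1 - 1/m_i) ≤ 3` satisfy `k ≤ 4`, and if `k = 4` the list is one of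
`(2,3,5,n)` with `gcd(n,30)=1`, `(2,3,7,n)` with
`n ∈ {11,13,17,19,23,25,29,31,37,41}`, or `(2,3,11,13)`. -/
theorem stmt3 (k : ℕ) (m : ℕ → ℕ)
    (h2 : ∀ i, i < k → 2 ≤ m i)
    (hmono : ∀ i j, i < j → j < k → m i < m j)
    (hcop : ∀ i j, i < j → j < k → Nat.Coprime (m i) (m j))
    (hsum : ∑ i ∈ Finset.range k, (1 - 1 / (m i : ℚ)) ≤ 3) :
    k ≤ 4 ∧
      (k = 4 →
        (m 0 = 2 ∧ m 1 = 3 ∧ m 2 = 5 ∧ Nat.Coprime (m 3) 30) ∨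
        (m 0 = 2 ∧ m 1 = 3 ∧ m 2 = 7 ∧
          m 3 ∈ ({11, 13, 17, 19, 23, 25, 29, 31, 37, 41} : Set ℕ)) ∨
        (m 0 = 2 ∧ m 1 = 3 ∧ m 2 = 11 ∧ m 3 = 13)) := by
  have hmge : ∀ i, i < k → i + 2 ≤ m i := by
    intro i
    induction i with
    | zero => intro h; simpa using h2 0 h
    | succ n ih =>
      intro h
      have h1 : n < k := Nat.lt_of_succ_lt h
      have h2' := hmono n (n+1) (Nat.lt_succ_self n) h
      have := ih h1
      omega
  have hk4 : k ≤ 4 := by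
    by_contra hk
    push_neg at hk
    have hk5 : 5 ≤ k := hk
    have hsub : ∑ i ∈ Finset.range 5, (1 - 1/(m i:ℚ)) ≤ ∑ i ∈ Finset.range k, (1 - 1/(m i:ℚ)) := by
      apply Finset.sum_le_sum_of_subset_of_nonneg
      · exact Finset.range_subset_range.mpr hk5
      · intro i hi _
        have h2i := h2 i (Finset.mem_range.mp hi)
        have : ((m i : ℚ))⁻¹ ≤ 1/2 := recb (m i) 2 (1/2) (by norm_num) h2i (by norm_num)
        rw [one_div (m i : ℚ)]
        linarith
    simp only [Finset.sum_range_succ, Finset.sum_range_zero, one_div] at hsub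
    simp only [one_div] at hsum
    have b0 := recb (m 0) 2 (1/2) (by norm_num) (hmge 0 (by omega)) (by norm_num)
    have b1 := recb (m 1) 3 (1/3) (by norm_num) (hmge 1 (by omega)) (by norm_num)
    have b2 := recb (m 2) 4 (1/4) (by norm_num) (hmge 2 (by omega)) (by norm_num)
    have b3 := recb (m 3) 5 (1/5) (by norm_num) (hmge 3 (by omega)) (by norm_num)
    have b4 := recb (m 4) 6 (1/6) (by norm_num) (hmge 4 (by omega)) (by norm_num)
    linarith
  refine ⟨hk4, fun hk => ?_⟩
  subst hk
  have hq : 1 ≤ (1:ℚ)/(m 0) + 1/(m 1) + 1/(m 2) + 1/(m 3) := by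
    simp only [Finset.sum_range_succ, Finset.sum_range_zero] at hsum
    linarith
  exact key (m 0) (m 1) (m 2) (m 3) (h2 0 (by omega))
    (hmono 0 1 (by omega) (by omega)) (hmono 1 2 (by omega) (by omega))
    (hmono 2 3 (by omega) (by omega))
    (hcop 0 1 (by omega) (by omega)) (hcop 0 2 (by omega) (by omega))
    (hcop 0 3 (by omega) (by omega)) (hcop 1 2 (by omega) (by omega))
    (hcop 1 3 (by omega) (by omega)) (hcop 2 3 (by omega) (by omega)) hq
end

section
/- Let a_1, a_2, a_3 be positive integers and set w_1 = a_2 a_3 - a_3 + 1, w_2 = a_3 a_1 - a_1 + 1, w_3 = a_1 a_2 - a_2 + 1, D = a_1 a_2 a_3 + 1, and w* = gcd(w_1, w_2, w_3). Let u_i = w_i/w* (i = 1, 2, 3) and d = D/w*. Then d(d - u_1 - u_2 - u_3)/(u_1 u_2 u_3) = w* - 1/u_1 - 1/u_2 - 1/u_3. -/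
/-- With `w₁ = a₂a₃ - a₃ + 1`, `w₂ = a₃a₁ - a₁ + 1`, `w₃ = a₁a₂ - a₂ + 1`,
`D = a₁a₂a₃ + 1`, `w* = gcd(w₁,w₂,w₃)`, `uᵢ = wᵢ/w*` and `d = D/w*`:
`d(d - u₁ - u₂ - u₃)/(u₁u₂u₃) = w* - 1/u₁ - 1/u₂ - 1/u₃`. -/
theorem stmt8 (a₁ a₂ a₃ : ℤ) (h₁ : 1 ≤ a₁) (h₂ : 1 ≤ a₂) (h₃ : 1 ≤ a₃) :
    let w₁ : ℤ := a₂ * a₃ - a₃ + 1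
    let w₂ : ℤ := a₃ * a₁ - a₁ + 1
    let w₃ : ℤ := a₁ * a₂ - a₂ + 1
    let D : ℤ := a₁ * a₂ * a₃ + 1
    let wstar : ℤ := gcd w₁ (gcd w₂ w₃)
    let u₁ : ℚ := (w₁ : ℚ) / (wstar : ℚ)
    let u₂ : ℚ := (w₂ : ℚ) / (wstar : ℚ)
    let u₃ : ℚ := (w₃ : ℚ) / (wstar : ℚ)
    let d : ℚ := (D : ℚ) / (wstar : ℚ)
    d * (d - u₁ - u₂ - u₃) / (u₁ * u₂ * u₃) =
      (wstar : ℚ) - 1 / u₁ - 1 / u₂ - 1 / u₃ := by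
  intro w₁ w₂ w₃ D wstar u₁ u₂ u₃ d
  have hw₁ : (0:ℤ) < w₁ := by simp only [w₁]; nlinarith
  have hw₂ : (0:ℤ) < w₂ := by simp only [w₂]; nlinarith
  have hw₃ : (0:ℤ) < w₃ := by simp only [w₃]; nlinarith
  have hws : (0:ℤ) < wstar := by
    have : wstar ∣ w₁ := gcd_dvd_left _ _
    have hnn : (0:ℤ) ≤ wstar := by simp only [wstar, ← Int.coe_gcd]; positivity
    rcases hnn.lt_or_eq with h|h
    · exact h
    · exact absurd (h ▸ this) (by simp [hw₁.ne'])
  have hw₁q : (w₁:ℚ) ≠ 0 := Int.cast_ne_zero.mpr hw₁.ne'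
  have hw₂q : (w₂:ℚ) ≠ 0 := Int.cast_ne_zero.mpr hw₂.ne'
  have hw₃q : (w₃:ℚ) ≠ 0 := Int.cast_ne_zero.mpr hw₃.ne'
  have hwsq : (wstar:ℚ) ≠ 0 := Int.cast_ne_zero.mpr hws.ne'
  have key : (D:ℚ) * (D - w₁ - w₂ - w₃) =
      (w₁:ℚ) * w₂ * w₃ - w₂ * w₃ - w₁ * w₃ - w₁ * w₂ := by
    simp only [w₁, w₂, w₃, D]
    push_cast
    ring
  simp only [u₁, u₂, u₃, d]
  field_simp
  linear_combination key
end

section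
/- Let a ≥ 2 be an integer and f(x,y,z) = x^a y + y^a z + ω z^a x with ω a fixed nonzero complex number. The Milnor number of f at the origin, i.e. dim_ℂ ℂ[x,y,z]/(∂f/∂x, ∂f/∂y, ∂f/∂z), equals a^3. -/
/-!
Write `f_x, f_y, f_z` for the partials and `J` for the Jacobian ideal. Solving small linear
systems in the relations puts nine monomials in `J`: `x^a y, y^a z, x z^a, x^a z^(a-1),
x^(a-1) y^a, y^(a-1) z^a, x^(2a), y^(2a), z^(2a)`. Modulo these, a monomial outside the box
`i, j, k < a` is reduced by one step `x^a ↦ -a y^(a-1) z`, `y^a ↦ -aω x z^(a-1)` or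
`z^a ↦ -(a/ω) x^(a-1) y` to a multiple of a box monomial. This defines a linear normal form
`N : ℂ[x,y,z] → ℂ[x,y,z]` with `m ≡ N m (mod J)`, fixing box monomials and vanishing on `J`
(checked on `g * m` for each generator `g` and monomial `m`). So the `a³` box monomials form a
basis of the Jacobian ring.
-/

open MvPolynomial

theorem MvPolynomial.linearMap_eq_zero_of_mem_ideal_span {σ R M : Type*} [CommSemiring R]
    [AddCommMonoid M] [Module R M] (L : MvPolynomial σ R →ₗ[R] M) {S : Set (MvPolynomial σ R)}
    (hS : ∀ s ∈ S, ∀ v, L (s * monomial v 1) = 0) {p : MvPolynomial σ R}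
    (hp : p ∈ Ideal.span S) : L p = 0 := by
  suffices ∀ c, L (c * p) = 0 by simpa using this 1
  induction hp using Submodule.span_induction with
  | mem s hs =>
    have : L ∘ₗ LinearMap.mulRight R s = 0 := by
      refine MvPolynomial.linearMap_ext fun v => LinearMap.ext_ring ?_
      rw [LinearMap.comp_apply, LinearMap.comp_apply, LinearMap.mulRight_apply, mul_comm]
      exact hS s hs v
    exact fun c => congr($this c)
  | zero => simp
  | add p q _ _ hp hq => simp [mul_add, hp, hq]
  | smul b p _ hp => intro c; simpa [← mul_assoc] using hp (c * b)

theorem Ideal.Quotient.linearIndependent_mkₐ_comp {ι R A M : Type*} [CommRing R] [CommRing A]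
    [Algebra R A] [AddCommGroup M] [Module R M] {J : Ideal A} (L : A →ₗ[R] M)
    (hL : ∀ p ∈ J, L p = 0) {v : ι → A} (hv : LinearIndependent R (L ∘ v)) :
    LinearIndependent R (Ideal.Quotient.mkₐ R J ∘ v) :=
  hv.of_comp ((J.restrictScalars R).liftQ L hL ∘ₗ
    (Submodule.Quotient.restrictScalarsEquiv R J).symm.toLinearMap)

theorem MvPolynomial.eq_top_of_mkₐ_monomial_mem {σ R : Type*} [CommRing R]
    {J : Ideal (MvPolynomial σ R)} {W : Submodule R (MvPolynomial σ R ⧸ J)}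
    (h : ∀ v, Ideal.Quotient.mkₐ R J (monomial v 1) ∈ W) : W = ⊤ := by
  rw [eq_top_iff]
  rintro x -
  obtain ⟨p, rfl⟩ := Ideal.Quotient.mkₐ_surjective R J x
  induction p using MvPolynomial.induction_on' with
  | monomial v c =>
    rw [show monomial v c = c • monomial v 1 by rw [smul_monomial, smul_eq_mul, mul_one]]
    exact W.smul_mem c (h v)
  | add p q hp hq => simpa using W.add_mem hp hq

namespace LoopPolynomial

noncomputable section

abbrev A := MvPolynomial (Fin 3) ℂ

def mon (i j k : ℕ) : A := X 0 ^ i * X 1 ^ j * X 2 ^ k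

theorem mon_mul (i j k i' j' k' : ℕ) :
    mon i j k * mon i' j' k' = mon (i + i') (j + j') (k + k') := by
  simp only [mon, pow_add]; ring

theorem monomial_one_eq_mon (v : Fin 3 →₀ ℕ) : monomial v (1 : ℂ) = mon (v 0) (v 1) (v 2) := by
  have hv : v = Finsupp.single 0 (v 0) + Finsupp.single 1 (v 1) + Finsupp.single 2 (v 2) := by
    ext i; fin_cases i <;> simp
  rw [hv]
  simp [mon, X_pow_eq_monomial, monomial_mul]

def exponent (i j k : ℕ) : Fin 3 →₀ ℕ := Finsupp.equivFunOnFinite.symm ![i, j, k]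

theorem mon_eq_monomial (i j k : ℕ) : mon i j k = monomial (exponent i j k) 1 := by
  simp [monomial_one_eq_mon, exponent]

variable (a : ℕ) (ω : ℂ)

def loop : A := X 0 ^ a * X 1 + X 1 ^ a * X 2 + C ω * (X 2 ^ a * X 0)

def fx : A := C (a : ℂ) * X 0 ^ (a - 1) * X 1 + C ω * X 2 ^ a
def fy : A := X 0 ^ a + C (a : ℂ) * X 1 ^ (a - 1) * X 2
def fz : A := X 1 ^ a + C ((a : ℂ) * ω) * X 2 ^ (a - 1) * X 0

theorem pderiv_zero_loop : pderiv 0 (loop a ω) = fx a ω := by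
  simp [loop, fx]; ring

theorem pderiv_one_loop : pderiv 1 (loop a ω) = fy a := by
  simp [loop, fy]; ring

theorem pderiv_two_loop : pderiv 2 (loop a ω) = fz a ω := by
  simp [loop, fz]; ring

def J : Ideal A := Ideal.span {fx a ω, fy a, fz a ω}

theorem fx_mem : fx a ω ∈ J a ω := Ideal.subset_span (by simp)
theorem fy_mem : fy a ∈ J a ω := Ideal.subset_span (by simp)
theorem fz_mem : fz a ω ∈ J a ω := Ideal.subset_span (by simp)

variable {a ω}

theorem fx_mul_mon (i j k : ℕ) :
    fx a ω * mon i j k = (a : ℂ) • mon (i + (a - 1)) (j + 1) k + ω • mon i j (k + a) := by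
  simp only [fx, mon, smul_eq_C_mul, pow_add]; ring

theorem fy_mul_mon (i j k : ℕ) :
    fy a * mon i j k = mon (i + a) j k + (a : ℂ) • mon i (j + (a - 1)) (k + 1) := by
  simp only [fy, mon, smul_eq_C_mul, pow_add]; ring

theorem fz_mul_mon (i j k : ℕ) :
    fz a ω * mon i j k = mon i (j + a) k + ((a : ℂ) * ω) • mon (i + 1) j (k + (a - 1)) := by
  simp only [fz, mon, smul_eq_C_mul, pow_add]; ring

theorem mem_J_of_C_mul_mem {c : ℂ} (hc : c ≠ 0) {p : A} (h : C c * p ∈ J a ω) : p ∈ J a ω :=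
  (Ideal.unit_mul_mem_iff_mem _ ((isUnit_iff_ne_zero.mpr hc).map C)).mp h

theorem mem_J_of_C_mul_eq {c : ℂ} (hc : c ≠ 0) {p : A} (q₁ q₂ q₃ : A)
    (h : C c * p = q₁ * fx a ω + q₂ * fy a + q₃ * fz a ω) : p ∈ J a ω := by
  refine mem_J_of_C_mul_mem hc ?_
  rw [h]
  exact add_mem (add_mem (Ideal.mul_mem_left _ q₁ (fx_mem a ω))
    (Ideal.mul_mem_left _ q₂ (fy_mem a ω))) (Ideal.mul_mem_left _ q₃ (fz_mem a ω))

theorem one_add_cube_ne_zero (n : ℕ) : 1 + (n : ℂ) ^ 3 ≠ 0 := by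
  exact_mod_cast (by positivity : 1 + n ^ 3 ≠ 0)

theorem mon_a_1_0_mem (ha : 1 ≤ a) : mon a 1 0 ∈ J a ω := by
  refine mem_J_of_C_mul_eq (one_add_cube_ne_zero a)
    (C ((a : ℂ) ^ 2) * X 0) (X 1) (-C (a : ℂ) * X 2) ?_
  obtain ⟨n, rfl⟩ : ∃ n, a = n + 1 := ⟨a - 1, by omega⟩
  simp [fx, fy, fz, mon]; ring

theorem mon_0_a_1_mem (ha : 1 ≤ a) : mon 0 a 1 ∈ J a ω := by
  refine mem_J_of_C_mul_eq (one_add_cube_ne_zero a)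
    (-C (a : ℂ) * X 0) (C ((a : ℂ) ^ 2) * X 1) (X 2) ?_
  obtain ⟨n, rfl⟩ : ∃ n, a = n + 1 := ⟨a - 1, by omega⟩
  simp [fx, fy, fz, mon]; ring

theorem mon_1_0_a_mem (ha : 1 ≤ a) (hω : ω ≠ 0) : mon 1 0 a ∈ J a ω := by
  refine mem_J_of_C_mul_eq (mul_ne_zero (one_add_cube_ne_zero a) hω)
    (X 0) (-C (a : ℂ) * X 1) (C ((a : ℂ) ^ 2) * X 2) ?_
  obtain ⟨n, rfl⟩ : ∃ n, a = n + 1 := ⟨a - 1, by omega⟩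
  simp [fx, fy, fz, mon]; ring

theorem mon_a_0_pred_mem (ha : 1 ≤ a) (hω : ω ≠ 0) : mon a 0 (a - 1) ∈ J a ω := by
  refine mem_J_of_C_mul_eq (mul_ne_zero (one_add_cube_ne_zero a) hω)
    (-C (a : ℂ) * X 1 ^ (a - 1)) (C ω * X 2 ^ (a - 1)) (C ((a : ℂ) ^ 2) * X 0 ^ (a - 1)) ?_
  obtain ⟨n, rfl⟩ : ∃ n, a = n + 1 := ⟨a - 1, by omega⟩
  simp [fx, fy, fz, mon]; ring

theorem mon_pred_a_0_mem (ha : 1 ≤ a) (hω : ω ≠ 0) : mon (a - 1) a 0 ∈ J a ω := by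
  have key : mon (a - 1) a 0 =
      X 0 ^ (a - 1) * fz a ω - C ((a : ℂ) * ω) * mon a 0 (a - 1) := by
    obtain ⟨n, rfl⟩ : ∃ n, a = n + 1 := ⟨a - 1, by omega⟩
    simp [fz, mon]; ring
  rw [key]
  exact sub_mem (Ideal.mul_mem_left _ _ (fz_mem a ω))
    (Ideal.mul_mem_left _ _ (mon_a_0_pred_mem ha hω))

theorem mon_0_pred_a_mem (ha : 1 ≤ a) (hω : ω ≠ 0) : mon 0 (a - 1) a ∈ J a ω := by
  have key : C ω * mon 0 (a - 1) a =
      X 1 ^ (a - 1) * fx a ω - C (a : ℂ) * mon (a - 1) a 0 := by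
    obtain ⟨n, rfl⟩ : ∃ n, a = n + 1 := ⟨a - 1, by omega⟩
    simp [fx, mon]; ring
  refine mem_J_of_C_mul_mem hω ?_
  rw [key]
  exact sub_mem (Ideal.mul_mem_left _ _ (fx_mem a ω))
    (Ideal.mul_mem_left _ _ (mon_pred_a_0_mem ha hω))

theorem mon_two_mul_0_0_mem (ha : 2 ≤ a) : mon (2 * a) 0 0 ∈ J a ω := by
  have key : mon (2 * a) 0 0 =
      X 0 ^ a * fy a - C (a : ℂ) * mon 0 (a - 2) 1 * mon a 1 0 := by
    obtain ⟨n, rfl⟩ : ∃ n, a = n + 2 := ⟨a - 2, by omega⟩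
    simp [fy, mon]; ring
  rw [key]
  exact sub_mem (Ideal.mul_mem_left _ _ (fy_mem a ω))
    (Ideal.mul_mem_left _ _ (mon_a_1_0_mem (by omega)))

theorem mon_0_two_mul_0_mem (ha : 2 ≤ a) : mon 0 (2 * a) 0 ∈ J a ω := by
  have key : mon 0 (2 * a) 0 =
      X 1 ^ a * fz a ω - C ((a : ℂ) * ω) * mon 1 0 (a - 2) * mon 0 a 1 := by
    obtain ⟨n, rfl⟩ : ∃ n, a = n + 2 := ⟨a - 2, by omega⟩
    simp [fz, mon]; ring
  rw [key]
  exact sub_mem (Ideal.mul_mem_left _ _ (fz_mem a ω))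
    (Ideal.mul_mem_left _ _ (mon_0_a_1_mem (by omega)))

theorem mon_0_0_two_mul_mem (ha : 2 ≤ a) (hω : ω ≠ 0) : mon 0 0 (2 * a) ∈ J a ω := by
  have key : C ω * mon 0 0 (2 * a) =
      X 2 ^ a * fx a ω - C (a : ℂ) * mon (a - 2) 1 0 * mon 1 0 a := by
    obtain ⟨n, rfl⟩ : ∃ n, a = n + 2 := ⟨a - 2, by omega⟩
    simp [fx, mon]; ring
  refine mem_J_of_C_mul_mem hω ?_
  rw [key]
  exact sub_mem (Ideal.mul_mem_left _ _ (fx_mem a ω))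
    (Ideal.mul_mem_left _ _ (mon_1_0_a_mem (by omega) hω))

theorem mon_mem_of_le {i j k i' j' k' : ℕ} (h : mon i j k ∈ J a ω) (hi : i ≤ i') (hj : j ≤ j')
    (hk : k ≤ k') : mon i' j' k' ∈ J a ω := by
  have : mon i' j' k' = mon (i' - i) (j' - j) (k' - k) * mon i j k := by
    rw [mon_mul, Nat.sub_add_cancel hi, Nat.sub_add_cancel hj, Nat.sub_add_cancel hk]
  exact this ▸ Ideal.mul_mem_left _ _ h

variable (a) in
/-- The monomials divisible by one of the nine monomials shown above to lie in `J`. -/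
def Vanishes (i j k : ℕ) : Prop :=
  (a ≤ i ∧ 1 ≤ j) ∨ (a ≤ j ∧ 1 ≤ k) ∨ (1 ≤ i ∧ a ≤ k) ∨
  (a ≤ i ∧ a - 1 ≤ k) ∨ (a - 1 ≤ i ∧ a ≤ j) ∨ (a - 1 ≤ j ∧ a ≤ k) ∨
  2 * a ≤ i ∨ 2 * a ≤ j ∨ 2 * a ≤ k

theorem mon_mem_of_vanishes (ha : 2 ≤ a) (hω : ω ≠ 0) {i j k : ℕ} (h : Vanishes a i j k) :
    mon i j k ∈ J a ω := by
  rcases h with ⟨hi, hj⟩ | ⟨hj, hk⟩ | ⟨hi, hk⟩ | ⟨hi, hk⟩ | ⟨hi, hj⟩ | ⟨hj, hk⟩ | hi | hj | hk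
  · exact mon_mem_of_le (mon_a_1_0_mem (by omega)) hi hj (Nat.zero_le k)
  · exact mon_mem_of_le (mon_0_a_1_mem (by omega)) (Nat.zero_le i) hj hk
  · exact mon_mem_of_le (mon_1_0_a_mem (by omega) hω) hi (Nat.zero_le j) hk
  · exact mon_mem_of_le (mon_a_0_pred_mem (by omega) hω) hi (Nat.zero_le j) hk
  · exact mon_mem_of_le (mon_pred_a_0_mem (by omega) hω) hi hj (Nat.zero_le k)
  · exact mon_mem_of_le (mon_0_pred_a_mem (by omega) hω) (Nat.zero_le i) hj hk
  · exact mon_mem_of_le (mon_two_mul_0_0_mem ha) hi (Nat.zero_le j) (Nat.zero_le k)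
  · exact mon_mem_of_le (mon_0_two_mul_0_mem ha) (Nat.zero_le i) hj (Nat.zero_le k)
  · exact mon_mem_of_le (mon_0_0_two_mul_mem ha hω) (Nat.zero_le i) (Nat.zero_le j) hk

variable (a ω) in
open scoped Classical in
def normalForm (i j k : ℕ) : A :=
  if Vanishes a i j k then 0
  else if a ≤ i then -(a : ℂ) • mon (i - a) (j + (a - 1)) (k + 1)
  else if a ≤ j then -((a : ℂ) * ω) • mon (i + 1) (j - a) (k + (a - 1))
  else if a ≤ k then -((a : ℂ) / ω) • mon (i + (a - 1)) (j + 1) (k - a)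
  else mon i j k

theorem normalForm_of_vanishes {i j k : ℕ} (h : Vanishes a i j k) :
    normalForm a ω i j k = 0 := by
  simp [normalForm, h]

theorem normalForm_of_lt {i j k : ℕ} (hi : i < a) (hj : j < a) (hk : k < a) :
    normalForm a ω i j k = mon i j k := by
  have hv : ¬ Vanishes a i j k := by unfold Vanishes; omega
  simp [normalForm, hv, hi.not_ge, hj.not_ge, hk.not_ge]

theorem normalForm_of_le_left {i j k : ℕ} (hv : ¬ Vanishes a i j k) (hi : a ≤ i) :
    normalForm a ω i j k = -(a : ℂ) • mon (i - a) (j + (a - 1)) (k + 1) := by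
  simp [normalForm, hv, hi]

theorem normalForm_of_le_mid {i j k : ℕ} (hv : ¬ Vanishes a i j k) (hi : i < a) (hj : a ≤ j) :
    normalForm a ω i j k = -((a : ℂ) * ω) • mon (i + 1) (j - a) (k + (a - 1)) := by
  simp [normalForm, hv, hi.not_ge, hj]

theorem normalForm_of_le_right {i j k : ℕ} (hv : ¬ Vanishes a i j k) (hi : i < a) (hj : j < a)
    (hk : a ≤ k) :
    normalForm a ω i j k = -((a : ℂ) / ω) • mon (i + (a - 1)) (j + 1) (k - a) := by
  simp [normalForm, hv, hi.not_ge, hj.not_ge, hk]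

theorem mon_sub_normalForm_mem (ha : 2 ≤ a) (hω : ω ≠ 0) (i j k : ℕ) :
    mon i j k - normalForm a ω i j k ∈ J a ω := by
  by_cases hv : Vanishes a i j k
  · rw [normalForm_of_vanishes hv, sub_zero]
    exact mon_mem_of_vanishes ha hω hv
  by_cases hi : a ≤ i
  · rw [normalForm_of_le_left hv hi]
    obtain ⟨m, rfl⟩ := Nat.exists_eq_add_of_le' hi
    rw [Nat.add_sub_cancel, neg_smul, sub_neg_eq_add, ← fy_mul_mon]
    exact Ideal.mul_mem_right _ _ (fy_mem a ω)
  by_cases hj : a ≤ j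
  · rw [normalForm_of_le_mid hv (by omega) hj]
    obtain ⟨m, rfl⟩ := Nat.exists_eq_add_of_le' hj
    rw [Nat.add_sub_cancel, neg_smul, sub_neg_eq_add, ← fz_mul_mon]
    exact Ideal.mul_mem_right _ _ (fz_mem a ω)
  by_cases hk : a ≤ k
  · rw [normalForm_of_le_right hv (by omega) (by omega) hk]
    obtain ⟨m, rfl⟩ := Nat.exists_eq_add_of_le' hk
    have key : mon i j (m + a) - -((a : ℂ) / ω) • mon (i + (a - 1)) (j + 1) m =
        ω⁻¹ • (fx a ω * mon i j m) := by
      rw [fx_mul_mon, smul_add, smul_smul, smul_smul, inv_mul_cancel₀ hω, one_smul,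
        neg_smul, sub_neg_eq_add, add_comm, div_eq_inv_mul]
    rw [Nat.add_sub_cancel, key, smul_eq_C_mul]
    exact Ideal.mul_mem_left _ _ (Ideal.mul_mem_right _ _ (fx_mem a ω))
  rw [normalForm_of_lt (by omega) (by omega) (by omega), sub_self]
  exact zero_mem _

theorem normalForm_fx_step (hω : ω ≠ 0) (i j k : ℕ) :
    (a : ℂ) • normalForm a ω (i + (a - 1)) (j + 1) k + ω • normalForm a ω i j (k + a) = 0 := by
  by_cases hv : Vanishes a i j (k + a)
  · have hv' : Vanishes a (i + (a - 1)) (j + 1) k := by unfold Vanishes at hv ⊢; omega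
    simp [normalForm_of_vanishes hv, normalForm_of_vanishes hv']
  have hv' := hv
  unfold Vanishes at hv'
  rw [normalForm_of_le_right hv (by omega) (by omega) (by omega), Nat.add_sub_cancel,
    normalForm_of_lt (by omega) (by omega) (by omega), smul_smul, mul_neg, mul_div_cancel₀ _ hω]
  simp

theorem normalForm_fy_step (i j k : ℕ) :
    normalForm a ω (i + a) j k + (a : ℂ) • normalForm a ω i (j + (a - 1)) (k + 1) = 0 := by
  by_cases hv : Vanishes a (i + a) j k
  · have hv' : Vanishes a i (j + (a - 1)) (k + 1) := by unfold Vanishes at hv ⊢; omega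
    simp [normalForm_of_vanishes hv, normalForm_of_vanishes hv']
  have hv' := hv
  unfold Vanishes at hv'
  rw [normalForm_of_le_left hv (by omega), Nat.add_sub_cancel,
    normalForm_of_lt (by omega) (by omega) (by omega)]
  simp

theorem normalForm_fz_step (i j k : ℕ) :
    normalForm a ω i (j + a) k + ((a : ℂ) * ω) • normalForm a ω (i + 1) j (k + (a - 1)) = 0 := by
  by_cases hv : Vanishes a i (j + a) k
  · have hv' : Vanishes a (i + 1) j (k + (a - 1)) := by unfold Vanishes at hv ⊢; omega
    simp [normalForm_of_vanishes hv, normalForm_of_vanishes hv']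
  have hv' := hv
  unfold Vanishes at hv'
  rw [normalForm_of_le_mid hv (by omega) (by omega), Nat.add_sub_cancel,
    normalForm_of_lt (by omega) (by omega) (by omega)]
  simp

variable (a ω) in
def normalFormMap : A →ₗ[ℂ] A :=
  (basisMonomials (Fin 3) ℂ).constr ℂ fun v => normalForm a ω (v 0) (v 1) (v 2)

theorem normalFormMap_mon (i j k : ℕ) :
    normalFormMap a ω (mon i j k) = normalForm a ω i j k := by
  rw [mon_eq_monomial, ← congrFun (coe_basisMonomials (Fin 3) ℂ), normalFormMap,
    Module.Basis.constr_basis]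
  simp [exponent]

theorem normalFormMap_mul_monomial (hω : ω ≠ 0) {s : A}
    (hs : s ∈ ({fx a ω, fy a, fz a ω} : Set A)) (v : Fin 3 →₀ ℕ) :
    normalFormMap a ω (s * monomial v 1) = 0 := by
  rw [monomial_one_eq_mon]
  rcases hs with rfl | rfl | rfl
  · rw [fx_mul_mon, map_add, map_smul, map_smul, normalFormMap_mon, normalFormMap_mon]
    exact normalForm_fx_step hω _ _ _
  · rw [fy_mul_mon, map_add, map_smul, normalFormMap_mon, normalFormMap_mon]
    exact normalForm_fy_step _ _ _
  · rw [fz_mul_mon, map_add, map_smul, normalFormMap_mon, normalFormMap_mon]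
    exact normalForm_fz_step _ _ _

theorem normalFormMap_eq_zero_of_mem (hω : ω ≠ 0) {p : A} (hp : p ∈ J a ω) :
    normalFormMap a ω p = 0 :=
  linearMap_eq_zero_of_mem_ideal_span _ (fun _ hs => normalFormMap_mul_monomial hω hs) hp

variable (a) in
def box (t : Fin a × Fin a × Fin a) : A := mon t.1 t.2.1 t.2.2

theorem normalFormMap_comp_box : normalFormMap a ω ∘ box a = box a :=
  funext fun t => (normalFormMap_mon _ _ _).trans (normalForm_of_lt t.1.isLt t.2.1.isLt t.2.2.isLt)

theorem linearIndependent_box : LinearIndependent ℂ (box a) := by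
  have hinj : Function.Injective fun t : Fin a × Fin a × Fin a => exponent t.1 t.2.1 t.2.2 := by
    intro s t h
    have h' := congrArg (⇑) h
    simp [exponent, Fin.val_inj] at h'
    ext <;> simp_all
  have hbox : box a = basisMonomials (Fin 3) ℂ ∘ fun t => exponent t.1 t.2.1 t.2.2 := by
    ext1 t
    simp [box, mon_eq_monomial, coe_basisMonomials]
  rw [hbox]
  exact (basisMonomials (Fin 3) ℂ).linearIndependent.comp _ hinj

theorem normalForm_mem_span_box (i j k : ℕ) :
    normalForm a ω i j k ∈ Submodule.span ℂ (Set.range (box a)) := by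
  have mem {i j k : ℕ} (hi : i < a) (hj : j < a) (hk : k < a) :
      mon i j k ∈ Submodule.span ℂ (Set.range (box a)) :=
    Submodule.subset_span ⟨(⟨i, hi⟩, ⟨j, hj⟩, ⟨k, hk⟩), rfl⟩
  by_cases hv : Vanishes a i j k
  · rw [normalForm_of_vanishes hv]
    exact zero_mem _
  have hv' := hv
  unfold Vanishes at hv'
  by_cases hi : a ≤ i
  · rw [normalForm_of_le_left hv hi]
    exact Submodule.smul_mem _ _ (mem (by omega) (by omega) (by omega))
  by_cases hj : a ≤ j
  · rw [normalForm_of_le_mid hv (by omega) hj]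
    exact Submodule.smul_mem _ _ (mem (by omega) (by omega) (by omega))
  by_cases hk : a ≤ k
  · rw [normalForm_of_le_right hv (by omega) (by omega) hk]
    exact Submodule.smul_mem _ _ (mem (by omega) (by omega) (by omega))
  rw [normalForm_of_lt (by omega) (by omega) (by omega)]
  exact mem (by omega) (by omega) (by omega)

theorem linearIndependent_mkₐ_box (hω : ω ≠ 0) :
    LinearIndependent ℂ (Ideal.Quotient.mkₐ ℂ (J a ω) ∘ box a) :=
  Ideal.Quotient.linearIndependent_mkₐ_comp (normalFormMap a ω)
    (fun _ => normalFormMap_eq_zero_of_mem hω)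
    (by rw [normalFormMap_comp_box]; exact linearIndependent_box)

theorem span_mkₐ_box (ha : 2 ≤ a) (hω : ω ≠ 0) :
    Submodule.span ℂ (Set.range (Ideal.Quotient.mkₐ ℂ (J a ω) ∘ box a)) = ⊤ := by
  refine eq_top_of_mkₐ_monomial_mem fun v => ?_
  rw [Set.range_comp, ← AlgHom.coe_toLinearMap, ← Submodule.map_span, monomial_one_eq_mon]
  refine ⟨_, normalForm_mem_span_box (ω := ω) (v 0) (v 1) (v 2), ?_⟩
  simp only [AlgHom.toLinearMap_apply, Ideal.Quotient.mkₐ_eq_mk]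
  exact ((Ideal.Quotient.mk_eq_mk_iff_sub_mem _ _).mpr (mon_sub_normalForm_mem ha hω _ _ _)).symm

theorem finrank_quotient_J (ha : 2 ≤ a) (hω : ω ≠ 0) :
    Module.finrank ℂ (A ⧸ J a ω) = a ^ 3 := by
  rw [Module.finrank_eq_card_basis
    (Module.Basis.mk (linearIndependent_mkₐ_box hω) (span_mkₐ_box ha hω).ge)]
  simp [Fintype.card_prod]
  ring

end

end LoopPolynomial

open MvPolynomial in
/-- The Milnor number of `f = x^a y + y^a z + ω z^a x` (for `a ≥ 2`, `ω ≠ 0`)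
is `a³`: the Jacobian ring has complex dimension `a³`. -/
theorem stmt9 (a : ℕ) (ha : 2 ≤ a) (ω : ℂ) (hω : ω ≠ 0) :
    let f : MvPolynomial (Fin 3) ℂ :=
      X 0 ^ a * X 1 + X 1 ^ a * X 2 + C ω * (X 2 ^ a * X 0)
    Module.finrank ℂ
        (MvPolynomial (Fin 3) ℂ ⧸
          Ideal.span {pderiv 0 f, pderiv 1 f, pderiv 2 f}) = a ^ 3 := by
  intro f
  rw [show f = LoopPolynomial.loop a ω from rfl, LoopPolynomial.pderiv_zero_loop,
    LoopPolynomial.pderiv_one_loop, LoopPolynomial.pderiv_two_loop]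
  exact LoopPolynomial.finrank_quotient_J ha hω
end

section
/- Let a_1, ..., a_n be integers all ≥ n ≥ 3, with w_i and D as in the cyclic weight construction and w* = gcd(W_1,...,W_n) = 1 (so w_i = W_i, d = D). Then d - Σ_{i=1}^n w_i > 0. -/
/-- Bounds for an alternating sum of a decreasing nonnegative sequence. -/
lemma alt_bounds : ∀ (m : ℕ) (T : ℕ → ℤ), (∀ j, 0 ≤ T j) → (∀ j, T (j+1) ≤ T j) →
    0 ≤ ∑ j ∈ Finset.range m, (-1:ℤ)^j * T j ∧
      ∑ j ∈ Finset.range m, (-1:ℤ)^j * T j ≤ T 0 := by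
  intro m
  induction m with
  | zero => intro T h0 _; simpa using h0 0
  | succ m ih =>
    intro T h0 hd
    have key : ∑ j ∈ Finset.range (m+1), (-1:ℤ)^j * T j
        = T 0 - ∑ j ∈ Finset.range m, (-1:ℤ)^j * T (j+1) := by
      rw [Finset.sum_range_succ']
      have : ∑ j ∈ Finset.range m, (-1:ℤ)^(j+1) * T (j+1)
          = -∑ j ∈ Finset.range m, (-1:ℤ)^j * T (j+1) := by
        rw [← Finset.sum_neg_distrib]
        exact Finset.sum_congr rfl fun j _ => by ring
      rw [this]; ring
    obtain ⟨h1, h2⟩ := ih (fun j => T (j+1)) (fun j => h0 _) (fun j => hd _)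
    constructor
    · rw [key]; have := hd 0; linarith
    · rw [key]; linarith

/-- Shift lemma for alternating sums. -/
lemma alt_shift (m : ℕ) (S : ℕ → ℤ) :
    ∑ j ∈ Finset.range (m+1), (-1:ℤ)^j * S j
      = S 0 - ∑ j ∈ Finset.range m, (-1:ℤ)^j * S (j+1) := by
  rw [Finset.sum_range_succ']
  have : ∑ j ∈ Finset.range m, (-1:ℤ)^(j+1) * S (j+1)
      = -∑ j ∈ Finset.range m, (-1:ℤ)^j * S (j+1) := by
    rw [← Finset.sum_neg_distrib]
    exact Finset.sum_congr rfl fun j _ => by ring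
  rw [this]; ring

/-- If every `aᵢ ≥ n ≥ 3` and `w* = gcd(W₁,…,Wₙ) = 1` (so `wᵢ = Wᵢ`, `d = D`),
then `d - Σ wᵢ > 0`. -/
theorem stmt15 (n : ℕ) [NeZero n] (hn : 3 ≤ n) (a : ZMod n → ℤ)
    (ha : ∀ i, (n : ℤ) ≤ a i)
    (hws : Finset.univ.gcd (cyclicW n a) = 1) :
    0 < cyclicD n a - ∑ i : ZMod n, cyclicW n a i := by
  have ha3 : ∀ i, (3:ℤ) ≤ a i := fun i => le_trans (by exact_mod_cast hn) (ha i)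
  set T : ZMod n → ℕ → ℤ :=
    fun i j => ∏ t ∈ Finset.range (n - 1 - j), a (i + (j : ZMod n) + 1 + (t : ZMod n)) with hT
  have hTpos : ∀ i j, 1 ≤ T i j := by
    intro i j
    simp only [hT]
    calc (1:ℤ) = ∏ _t ∈ Finset.range (n - 1 - j), (1:ℤ) := by simp
      _ ≤ ∏ t ∈ Finset.range (n - 1 - j), a (i + (j : ZMod n) + 1 + (t : ZMod n)) :=
          Finset.prod_le_prod (fun t _ => zero_le_one)
            (fun t _ => le_trans (show (1:ℤ) ≤ 3 by norm_num) (ha3 _))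
  have hstep : ∀ (i : ZMod n) (j : ℕ), j + 1 ≤ n - 1 →
      T i j = a (i + (j : ZMod n) + 1) * T i (j+1) := by
    intro i j hj
    have hm : n - 1 - j = (n - 1 - (j+1)) + 1 := by omega
    simp only [hT]
    rw [hm, Finset.prod_range_succ']
    have he : ∀ t : ℕ, (i + (j:ZMod n) + 1 + ((t+1:ℕ) : ZMod n))
        = i + ((j+1:ℕ) : ZMod n) + 1 + (t : ZMod n) := by
      intro t; push_cast; ring
    rw [Finset.prod_congr rfl fun t _ => by rw [he t]]
    push_cast
    ring
  have hdec : ∀ i j, T i (j+1) ≤ T i j := by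
    intro i j
    by_cases hj : j + 1 ≤ n - 1
    · rw [hstep i j hj]
      have h1 := hTpos i (j+1)
      have h2 := ha3 (i + (j:ZMod n) + 1)
      nlinarith
    · have e1 : n - 1 - j = 0 := by omega
      have e2 : n - 1 - (j+1) = 0 := by omega
      simp only [hT, e1, e2, Finset.range_zero, Finset.prod_empty]
      exact le_rfl
  have hWle : ∀ i, cyclicW n a i ≤ T i 0 - 2 := by
    intro i
    have hW : cyclicW n a i = ∑ j ∈ Finset.range n, (-1:ℤ)^j * T i j := rfl
    have hW2 : cyclicW n a i
        = T i 0 - ∑ j ∈ Finset.range (n-1), (-1:ℤ)^j * T i (j+1) := by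
      rw [hW]
      have := alt_shift (n-1) (T i)
      rwa [show n - 1 + 1 = n by omega] at this
    have hS : ∑ j ∈ Finset.range (n-1), (-1:ℤ)^j * T i (j+1)
        = T i 1 - ∑ j ∈ Finset.range (n-2), (-1:ℤ)^j * T i (j+2) := by
      have := alt_shift (n-2) (fun j => T i (j+1))
      rwa [show n - 2 + 1 = n - 1 by omega] at this
    have htail := (alt_bounds (n-2) (fun j => T i (j+2))
      (fun j => le_trans zero_le_one (hTpos i _)) (fun j => hdec i _)).2
    have hT1 : T i 1 = a (i + ((1:ℕ) : ZMod n) + 1) * T i 2 := hstep i 1 (by omega)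
    have h2 : (2:ℤ) ≤ T i 1 - T i 2 := by
      have p1 := hTpos i 2
      have p2 := ha3 (i + ((1:ℕ) : ZMod n) + 1)
      nlinarith [hT1]
    have hge : (2:ℤ) ≤ ∑ j ∈ Finset.range (n-1), (-1:ℤ)^j * T i (j+1) := by
      rw [hS]; linarith
    linarith [hW2, hge]
  set P : ℤ := ∏ k : ZMod n, a k with hP
  have hprod : ∀ i : ZMod n, T i 0 * a i = P := by
    intro i
    have hTi0 : T i 0 = ∏ t ∈ Finset.range (n-1), a (i + 1 + (t : ZMod n)) := by
      simp only [hT, Nat.sub_zero, Nat.cast_zero, add_zero]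
    have hlast : ((n - 1 : ℕ) : ZMod n) = -1 := by
      have h : ((n - 1 : ℕ) : ZMod n) = (n : ZMod n) - 1 := by
        push_cast [Nat.cast_sub (by omega : 1 ≤ n)]; ring
      rw [h, ZMod.natCast_self]; ring
    have h1 : T i 0 * a i = ∏ t ∈ Finset.range ((n-1)+1), a (i + 1 + (t : ZMod n)) := by
      rw [Finset.prod_range_succ, hTi0, hlast]
      have : i + 1 + (-1 : ZMod n) = i := by ring
      rw [this]
    rw [show (n-1)+1 = n by omega] at h1
    rw [h1, hP]
    exact Finset.prod_nbij' (fun t : ℕ => i + 1 + (t : ZMod n))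
      (fun x : ZMod n => (x - i - 1).val)
      (fun t _ => Finset.mem_univ _)
      (fun x _ => Finset.mem_range.mpr (x - i - 1).val_lt)
      (fun t ht => by
        have ht' := Finset.mem_range.mp ht
        have h : i + 1 + (t : ZMod n) - i - 1 = (t : ZMod n) := by ring
        simp only [h, ZMod.val_cast_of_lt ht'])
      (fun x _ => by
        have h := ZMod.natCast_rightInverse (n := n) (x - i - 1)
        simp only [h]; ring)
      (fun t _ => rfl)
  have hTP : ∀ i : ZMod n, (n:ℤ) * T i 0 ≤ P := by
    intro i
    rw [← hprod i]
    have h1 := hTpos i 0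
    have h2 := ha i
    nlinarith
  have hcard : (Finset.univ : Finset (ZMod n)).card = n := by
    rw [Finset.card_univ, ZMod.card]
  have hsumT : (n:ℤ) * ∑ i : ZMod n, T i 0 ≤ (n:ℤ) * P := by
    rw [Finset.mul_sum]
    calc ∑ i : ZMod n, (n:ℤ) * T i 0 ≤ ∑ _i : ZMod n, P := Finset.sum_le_sum fun i _ => hTP i
      _ = (n:ℤ) * P := by rw [Finset.sum_const, hcard]; ring
  have hsumT' : ∑ i : ZMod n, T i 0 ≤ P := by
    have hnpos : (0:ℤ) < n := by exact_mod_cast (by omega : 0 < n)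
    exact le_of_mul_le_mul_left hsumT hnpos
  have hsumW : ∑ i : ZMod n, cyclicW n a i ≤ P - 2 * n := by
    calc ∑ i : ZMod n, cyclicW n a i ≤ ∑ i : ZMod n, (T i 0 - 2) :=
          Finset.sum_le_sum fun i _ => hWle i
      _ = (∑ i : ZMod n, T i 0) - 2 * n := by
          rw [Finset.sum_sub_distrib, Finset.sum_const, hcard]; ring
      _ ≤ P - 2 * n := by linarith
  have hpow : (-1:ℤ) ≤ (-1:ℤ)^(n-1) := by
    rcases Nat.even_or_odd (n-1) with h | h
    · rw [h.neg_one_pow]; norm_num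
    · rw [h.neg_one_pow]
  have hn3 : (3:ℤ) ≤ (n:ℤ) := by exact_mod_cast hn
  rw [cyclicD, ← hP]
  linarith
end
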